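/- Let L : ℝ → ℝ be smooth and let q : ℝ → ℝ solve q'(t) = L(q(t)). Define the two-stage update q* = qₙ + (Δt/2)·L(qₙ) + (Δt²/8)·(L'·L)(qₙ) and q⁺ = qₙ + Δt·L(qₙ) + (Δt²/6)·((L'·L)(qₙ) + 2·(L'·L)(q*)), where (L'·L)(x) = L'(x)·L(x) is the total time derivative of L along the flow. Then q⁺ − q(tₙ + Δt) = O(Δt⁵) as Δt → 0, i.e., the two-stage method is fourth-order accurate for a single step. -/

import Mathlib

open Asymptotics Filter Set

noncomputable def GG (L : ℝ → ℝ) : ℝ → ℝ := fun x => deriv L x * L x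

noncomputable def psi (L : ℝ → ℝ) : ℕ → ℝ → ℝ
  | 0 => L
  | (k+1) => fun x => deriv (psi L k) x * L x

noncomputable def rr (L : ℝ → ℝ) (a : ℝ) : ℝ → ℝ :=
  fun t => a + t / 2 * L a + t ^ 2 / 8 * (deriv L a * L a)
noncomputable def rd (L : ℝ → ℝ) (a : ℝ) : ℝ → ℝ :=
  fun t => L a / 2 + t / 4 * GG L a

noncomputable def HH (L : ℝ → ℝ) (a : ℝ) : ℝ → ℝ := fun t => GG L (rr L a t)
noncomputable def Hd1 (L : ℝ → ℝ) (a : ℝ) : ℝ → ℝ :=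
  fun t => deriv (GG L) (rr L a t) * rd L a t
noncomputable def Hd2 (L : ℝ → ℝ) (a : ℝ) : ℝ → ℝ :=
  fun t => deriv (deriv (GG L)) (rr L a t) * rd L a t * rd L a t
    + deriv (GG L) (rr L a t) * (GG L a / 4)
noncomputable def Hd3 (L : ℝ → ℝ) (a : ℝ) : ℝ → ℝ :=
  fun t => (deriv (deriv (deriv (GG L))) (rr L a t) * rd L a t * rd L a t
      + deriv (deriv (GG L)) (rr L a t) * (GG L a / 4)) * rd L a t
    + deriv (deriv (GG L)) (rr L a t) * rd L a t * (GG L a / 4)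
    + deriv (deriv (GG L)) (rr L a t) * rd L a t * (GG L a / 4)

noncomputable def PP (L : ℝ → ℝ) (a : ℝ) : ℝ → ℝ :=
  fun t => a + t * L a + t ^ 2 / 6 * (deriv L a * L a + 2 * HH L a t)
noncomputable def Pd1 (L : ℝ → ℝ) (a : ℝ) : ℝ → ℝ :=
  fun t => L a + t / 3 * (GG L a + 2 * HH L a t) + t ^ 2 / 6 * (2 * Hd1 L a t)
noncomputable def Pd2 (L : ℝ → ℝ) (a : ℝ) : ℝ → ℝ :=
  fun t => 1 / 3 * (GG L a + 2 * HH L a t) + 2 * (t / 3) * (2 * Hd1 L a t)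
    + t ^ 2 / 6 * (2 * Hd2 L a t)
noncomputable def Pd3 (L : ℝ → ℝ) (a : ℝ) : ℝ → ℝ :=
  fun t => 2 * Hd1 L a t + 2 * t * Hd2 L a t + t ^ 2 / 3 * Hd3 L a t

lemma hd_congr {f : ℝ → ℝ} {v w t : ℝ} (h : HasDerivAt f v t) (hvw : v = w) :
    HasDerivAt f w t := hvw ▸ h

lemma deriv_contDiff {L : ℝ → ℝ} (hL : ContDiff ℝ (⊤ : ℕ∞) L) :
    ContDiff ℝ (⊤ : ℕ∞) (deriv L) := (contDiff_infty_iff_deriv.mp hL).2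

lemma GG_contDiff {L : ℝ → ℝ} (hL : ContDiff ℝ (⊤ : ℕ∞) L) : ContDiff ℝ (⊤ : ℕ∞) (GG L) :=
  (deriv_contDiff hL).mul hL

lemma psi_contDiff {L : ℝ → ℝ} (hL : ContDiff ℝ (⊤ : ℕ∞) L) :
    ∀ k, ContDiff ℝ (⊤ : ℕ∞) (psi L k)
  | 0 => hL
  | (k+1) => (deriv_contDiff (psi_contDiff hL k)).mul hL

lemma diff_of_cd {f : ℝ → ℝ} (hf : ContDiff ℝ (⊤ : ℕ∞) f) : Differentiable ℝ f :=
  hf.differentiable (by simp)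

lemma rr_hasDeriv (L : ℝ → ℝ) (a : ℝ) (t : ℝ) : HasDerivAt (rr L a) (rd L a t) t := by
  have h := ((hasDerivAt_const t a).add
      (((hasDerivAt_id t).div_const 2).mul_const (L a))).add
      (((hasDerivAt_pow 2 t).div_const 8).mul_const (deriv L a * L a))
  exact hd_congr h (by simp only [rd, GG, id_eq, pow_one, Nat.cast_ofNat]; push_cast; ring)

lemma rd_hasDeriv (L : ℝ → ℝ) (a : ℝ) (t : ℝ) : HasDerivAt (rd L a) (GG L a / 4) t := by
  have h := (hasDerivAt_const t (L a / 2)).add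
    (((hasDerivAt_id t).div_const 4).mul_const (GG L a))
  exact hd_congr h (by ring)

lemma HH_hasDeriv {L : ℝ → ℝ} (hL : ContDiff ℝ (⊤ : ℕ∞) L) (a t : ℝ) :
    HasDerivAt (HH L a) (Hd1 L a t) t :=
  ((diff_of_cd (GG_contDiff hL) (rr L a t)).hasDerivAt).comp t (rr_hasDeriv L a t)

lemma dGr_hasDeriv {L : ℝ → ℝ} (hL : ContDiff ℝ (⊤ : ℕ∞) L) (a t : ℝ) :
    HasDerivAt (fun t => deriv (GG L) (rr L a t))
      (deriv (deriv (GG L)) (rr L a t) * rd L a t) t :=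
  ((diff_of_cd (deriv_contDiff (GG_contDiff hL)) (rr L a t)).hasDerivAt).comp t (rr_hasDeriv L a t)

lemma ddGr_hasDeriv {L : ℝ → ℝ} (hL : ContDiff ℝ (⊤ : ℕ∞) L) (a t : ℝ) :
    HasDerivAt (fun t => deriv (deriv (GG L)) (rr L a t))
      (deriv (deriv (deriv (GG L))) (rr L a t) * rd L a t) t :=
  ((diff_of_cd (deriv_contDiff (deriv_contDiff (GG_contDiff hL))) (rr L a t)).hasDerivAt).comp
    t (rr_hasDeriv L a t)

lemma Hd1_hasDeriv {L : ℝ → ℝ} (hL : ContDiff ℝ (⊤ : ℕ∞) L) (a t : ℝ) :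
    HasDerivAt (Hd1 L a) (Hd2 L a t) t := by
  have h := (dGr_hasDeriv hL a t).mul (rd_hasDeriv L a t)
  exact hd_congr h (by simp only [Hd2]; try ring)

lemma Hd2_hasDeriv {L : ℝ → ℝ} (hL : ContDiff ℝ (⊤ : ℕ∞) L) (a t : ℝ) :
    HasDerivAt (Hd2 L a) (Hd3 L a t) t := by
  have h := (((ddGr_hasDeriv hL a t).mul (rd_hasDeriv L a t)).mul (rd_hasDeriv L a t)).add
    ((dGr_hasDeriv hL a t).mul_const (GG L a / 4))
  exact hd_congr h (by simp only [Hd3, Pi.mul_apply, Pi.add_apply]; try ring)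

lemma Hd3_diff {L : ℝ → ℝ} (hL : ContDiff ℝ (⊤ : ℕ∞) L) (a : ℝ) :
    Differentiable ℝ (Hd3 L a) := by
  have hrr : Differentiable ℝ (rr L a) := fun t => (rr_hasDeriv L a t).differentiableAt
  have hrd : Differentiable ℝ (rd L a) := fun t => (rd_hasDeriv L a t).differentiableAt
  have h2 := diff_of_cd (deriv_contDiff (deriv_contDiff (GG_contDiff hL)))
  have h3 := diff_of_cd (deriv_contDiff (deriv_contDiff (deriv_contDiff (GG_contDiff hL))))
  exact (((((h3.comp hrr).mul hrd).mul hrd).add ((h2.comp hrr).mul_const _)).mul hrd).add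
      ((((h2.comp hrr).mul hrd).mul_const _)) |>.add (((h2.comp hrr).mul hrd).mul_const _)

lemma PP_hasDeriv {L : ℝ → ℝ} (hL : ContDiff ℝ (⊤ : ℕ∞) L) (a t : ℝ) :
    HasDerivAt (PP L a) (Pd1 L a t) t := by
  have h := ((hasDerivAt_const t a).add ((hasDerivAt_id t).mul_const (L a))).add
    (((hasDerivAt_pow 2 t).div_const 6).mul
      ((hasDerivAt_const t (deriv L a * L a)).add ((HH_hasDeriv hL a t).const_mul 2)))
  exact hd_congr h (by simp only [Pd1, GG, id_eq, pow_one, Nat.cast_ofNat, Pi.add_apply]; push_cast; ring)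

lemma Pd1_hasDeriv {L : ℝ → ℝ} (hL : ContDiff ℝ (⊤ : ℕ∞) L) (a t : ℝ) :
    HasDerivAt (Pd1 L a) (Pd2 L a t) t := by
  have h := ((hasDerivAt_const t (L a)).add
      (((hasDerivAt_id t).div_const 3).mul
        ((hasDerivAt_const t (GG L a)).add ((HH_hasDeriv hL a t).const_mul 2)))).add
    (((hasDerivAt_pow 2 t).div_const 6).mul ((Hd1_hasDeriv hL a t).const_mul 2))
  exact hd_congr h (by simp only [Pd2, id_eq, pow_one, Nat.cast_ofNat, Pi.add_apply]; push_cast; ring)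

lemma Pd2_hasDeriv {L : ℝ → ℝ} (hL : ContDiff ℝ (⊤ : ℕ∞) L) (a t : ℝ) :
    HasDerivAt (Pd2 L a) (Pd3 L a t) t := by
  have h := (((hasDerivAt_const t ((1:ℝ)/3)).mul
      ((hasDerivAt_const t (GG L a)).add ((HH_hasDeriv hL a t).const_mul 2))).add
    ((((hasDerivAt_id t).div_const 3).const_mul 2).mul ((Hd1_hasDeriv hL a t).const_mul 2))).add
    (((hasDerivAt_pow 2 t).div_const 6).mul ((Hd2_hasDeriv hL a t).const_mul 2))
  exact hd_congr h (by simp only [Pd3, id_eq, pow_one, Nat.cast_ofNat]; push_cast; ring)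

lemma Pd3_hasDeriv_zero {L : ℝ → ℝ} (hL : ContDiff ℝ (⊤ : ℕ∞) L) (a : ℝ) :
    HasDerivAt (Pd3 L a) (4 * Hd2 L a 0) 0 := by
  have h1 := (Hd1_hasDeriv hL a 0).const_mul 2
  have h2 := (((hasDerivAt_id (0:ℝ)).const_mul 2).mul (Hd2_hasDeriv hL a 0))
  have h3 := (((hasDerivAt_pow 2 (0:ℝ)).div_const 3).mul ((Hd3_diff hL a) 0).hasDerivAt)
  have h := (h1.add h2).add h3
  exact hd_congr h (by simp only [id_eq, pow_one, Nat.cast_ofNat]; push_cast; ring)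

lemma rr_contDiff (L : ℝ → ℝ) (a : ℝ) : ContDiff ℝ (⊤ : ℕ∞) (rr L a) := by
  exact (contDiff_const.add ((contDiff_id.div_const 2).mul contDiff_const)).add
    (((contDiff_id.pow 2).div_const 8).mul contDiff_const)

lemma PP_contDiff {L : ℝ → ℝ} (hL : ContDiff ℝ (⊤ : ℕ∞) L) (a : ℝ) :
    ContDiff ℝ (⊤ : ℕ∞) (PP L a) := by
  have hHH : ContDiff ℝ (⊤ : ℕ∞) (HH L a) := (GG_contDiff hL).comp (rr_contDiff L a)
  exact (contDiff_const.add (contDiff_id.mul contDiff_const)).add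
    (((contDiff_id.pow 2).div_const 6).mul (contDiff_const.add (contDiff_const.mul hHH)))

lemma PP_iter1 {L : ℝ → ℝ} (hL : ContDiff ℝ (⊤ : ℕ∞) L) (a : ℝ) :
    iteratedDeriv 1 (PP L a) = Pd1 L a := by
  rw [iteratedDeriv_one]; funext t; exact (PP_hasDeriv hL a t).deriv

lemma PP_iter2 {L : ℝ → ℝ} (hL : ContDiff ℝ (⊤ : ℕ∞) L) (a : ℝ) :
    iteratedDeriv 2 (PP L a) = Pd2 L a := by
  rw [show (2:ℕ) = 1 + 1 from rfl, iteratedDeriv_succ, PP_iter1 hL a]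
  funext t; exact (Pd1_hasDeriv hL a t).deriv

lemma PP_iter3 {L : ℝ → ℝ} (hL : ContDiff ℝ (⊤ : ℕ∞) L) (a : ℝ) :
    iteratedDeriv 3 (PP L a) = Pd3 L a := by
  rw [show (3:ℕ) = 2 + 1 from rfl, iteratedDeriv_succ, PP_iter2 hL a]
  funext t; exact (Pd2_hasDeriv hL a t).deriv

lemma PP_iter4 {L : ℝ → ℝ} (hL : ContDiff ℝ (⊤ : ℕ∞) L) (a : ℝ) :
    iteratedDeriv 4 (PP L a) 0 = 4 * Hd2 L a 0 := by
  rw [show (4:ℕ) = 3 + 1 from rfl, iteratedDeriv_succ, PP_iter3 hL a]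
  exact (Pd3_hasDeriv_zero hL a).deriv

lemma Q_contDiff {L Q : ℝ → ℝ} (hL : ContDiff ℝ (⊤ : ℕ∞) L)
    (hQ : ∀ t, HasDerivAt Q (L (Q t)) t) : ContDiff ℝ (⊤ : ℕ∞) Q := by
  apply contDiff_infty.mpr
  intro n
  induction n with
  | zero =>
      rw [show ((0:ℕ) : WithTop ℕ∞) = 0 from rfl, contDiff_zero]
      have : Differentiable ℝ Q := fun t => (hQ t).differentiableAt
      exact this.continuous
  | succ n ih =>
      rw [show ((n+1:ℕ) : WithTop ℕ∞) = (n : WithTop ℕ∞) + 1 by push_cast; rfl]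
      refine contDiff_succ_iff_deriv.mpr ⟨fun t => (hQ t).differentiableAt, ?_, ?_⟩
      · intro h; simp at h
      · have hd : deriv Q = fun t => L (Q t) := funext fun t => (hQ t).deriv
        rw [hd]
        exact (hL.of_le (by exact_mod_cast (le_top : (n : ℕ∞) ≤ ⊤))).comp ih

lemma Q_iter {L Q : ℝ → ℝ} (hL : ContDiff ℝ (⊤ : ℕ∞) L)
    (hQ : ∀ t, HasDerivAt Q (L (Q t)) t) :
    ∀ k, iteratedDeriv (k+1) Q = fun t => psi L k (Q t)
  | 0 => by
      rw [iteratedDeriv_one]; funext t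
      show deriv Q t = L (Q t)
      exact (hQ t).deriv
  | (k+1) => by
      rw [iteratedDeriv_succ, Q_iter hL hQ k]
      funext t
      have hpsi : HasDerivAt (fun t => psi L k (Q t)) (deriv (psi L k) (Q t) * L (Q t)) t :=
        ((diff_of_cd (psi_contDiff hL k) (Q t)).hasDerivAt).comp t (hQ t)
      show deriv (fun t => psi L k (Q t)) t = deriv (psi L k) (Q t) * L (Q t)
      exact hpsi.deriv

lemma rr0 (L : ℝ → ℝ) (a : ℝ) : rr L a 0 = a := by simp [rr]
lemma rd0 (L : ℝ → ℝ) (a : ℝ) : rd L a 0 = L a / 2 := by simp [rd]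

lemma psi_one (L : ℝ → ℝ) : psi L 1 = GG L := rfl

lemma psi_two (L : ℝ → ℝ) : psi L 2 = fun x => deriv (GG L) x * L x := by
  funext x
  show deriv (psi L 1) x * L x = _
  rw [psi_one]

lemma psi_three_val {L : ℝ → ℝ} (hL : ContDiff ℝ (⊤ : ℕ∞) L) (a : ℝ) :
    psi L 3 a = (deriv (deriv (GG L)) a * L a + deriv (GG L) a * deriv L a) * L a := by
  show deriv (psi L 2) a * L a = _
  rw [psi_two]
  congr 1
  have h : HasDerivAt (fun x => deriv (GG L) x * L x)
      (deriv (deriv (GG L)) a * L a + deriv (GG L) a * deriv L a) a :=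
    ((diff_of_cd (deriv_contDiff (GG_contDiff hL)) a).hasDerivAt).mul
      ((diff_of_cd hL a).hasDerivAt)
  exact h.deriv

lemma step_lemma {f g : ℝ → ℝ} {k : ℕ} (hf0 : f 0 = 0)
    (hf : ∀ x, HasDerivAt f (g x) x) (hg : g =O[nhds 0] fun x => x ^ k) :
    f =O[nhds 0] fun x => x ^ (k + 1) := by
  rw [isBigO_iff] at hg
  obtain ⟨C, hC⟩ := hg
  obtain ⟨ε, hε, hball⟩ := Metric.eventually_nhds_iff.mp hC
  rw [isBigO_iff]
  refine ⟨max C 0, Metric.eventually_nhds_iff.mpr ⟨ε, hε, fun x hx => ?_⟩⟩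
  have key : ∀ y ∈ uIcc (0:ℝ) x, ‖g y‖ ≤ max C 0 * ‖x‖ ^ k := by
    intro y hy
    have hyx : |y| ≤ |x| := by
      rw [Set.mem_uIcc] at hy
      rcases hy with ⟨h1, h2⟩ | ⟨h1, h2⟩ <;> rw [abs_le] <;>
        constructor <;> nlinarith [abs_nonneg x, le_abs_self x, neg_abs_le x]
    have hyd : dist y 0 < ε := by
      simp only [Real.dist_eq, sub_zero] at hx ⊢; exact lt_of_le_of_lt hyx hx
    calc ‖g y‖ ≤ C * ‖y ^ k‖ := hball hyd
      _ ≤ max C 0 * ‖x‖ ^ k := by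
          rw [norm_pow]
          have h1 : ‖y‖ ^ k ≤ ‖x‖ ^ k := pow_le_pow_left₀ (norm_nonneg _) hyx k
          have h2 : C ≤ max C 0 := le_max_left _ _
          have h3 : (0:ℝ) ≤ max C 0 := le_max_right _ _
          nlinarith [pow_nonneg (norm_nonneg y) k]
  have := (convex_uIcc (0:ℝ) x).norm_image_sub_le_of_norm_hasDerivWithin_le
    (fun y _ => (hf y).hasDerivWithinAt) key (left_mem_uIcc) (right_mem_uIcc)
  simp only [hf0, sub_zero] at this
  calc ‖f x‖ ≤ max C 0 * ‖x‖ ^ k * ‖x‖ := this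
    _ = max C 0 * ‖x ^ (k+1)‖ := by rw [norm_pow, pow_succ]; ring

lemma key_lemma (f : ℝ → ℝ) (hf : ContDiff ℝ (⊤ : ℕ∞) f) :
    ∀ n : ℕ, (∀ k < n, iteratedDeriv k f 0 = 0) → f =O[nhds 0] fun x => x ^ n := by
  intro n
  induction n generalizing f with
  | zero => intro _
            simpa using (hf.continuous.tendsto 0).isBigO_one ℝ
  | succ m ih =>
    intro h
    refine step_lemma ?_ (fun x => (hf.differentiable (by simp) x).hasDerivAt) ?_
    · simpa [iteratedDeriv_zero] using h 0 (Nat.succ_pos m)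
    · refine ih (deriv f) (contDiff_infty_iff_deriv.mp hf).2 fun k hk => ?_
      rw [← iteratedDeriv_succ']
      exact h (k+1) (Nat.succ_lt_succ hk)

lemma iter_sub {f g : ℝ → ℝ} (hf : ContDiff ℝ (⊤ : ℕ∞) f) (hg : ContDiff ℝ (⊤ : ℕ∞) g) :
    ∀ n : ℕ,
      iteratedDeriv n (fun t => f t - g t) = fun t => iteratedDeriv n f t - iteratedDeriv n g t
  | 0 => by simp [iteratedDeriv_zero]
  | (n+1) => by
      rw [iteratedDeriv_succ, iteratedDeriv_succ, iteratedDeriv_succ, iter_sub hf hg n]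
      funext t
      have df : DifferentiableAt ℝ (iteratedDeriv n f) t := by
        rw [iteratedDeriv_eq_iterate]
        exact (hf.iterate_deriv n).differentiable (by simp) t
      have dg : DifferentiableAt ℝ (iteratedDeriv n g) t := by
        rw [iteratedDeriv_eq_iterate]
        exact (hg.iterate_deriv n).differentiable (by simp) t
      exact deriv_fun_sub df dg

theorem aux_main {L : ℝ → ℝ} (hL : ContDiff ℝ (⊤ : ℕ∞) L) {Q : ℝ → ℝ}
    (hQ : ∀ t, HasDerivAt Q (L (Q t)) t) {a : ℝ} (ha : Q 0 = a) :
    (fun t => PP L a t - Q t) =O[nhds 0] fun t => t ^ 5 := by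
  have hQc : ContDiff ℝ (⊤ : ℕ∞) Q := Q_contDiff hL hQ
  have hPc : ContDiff ℝ (⊤ : ℕ∞) (PP L a) := PP_contDiff hL a
  apply key_lemma _ (hPc.sub hQc) 5
  intro k hk
  rw [iter_sub hPc hQc k]
  interval_cases k
  · simp only [iteratedDeriv_zero, ha]
    norm_num [PP]
  · rw [show (1:ℕ) = 0 + 1 from rfl, Q_iter hL hQ 0, PP_iter1 hL a]
    show Pd1 L a 0 - L (Q 0) = 0
    rw [ha]; norm_num [Pd1]
  · rw [show (2:ℕ) = 1 + 1 from rfl, Q_iter hL hQ 1, PP_iter2 hL a]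
    show Pd2 L a 0 - psi L 1 (Q 0) = 0
    rw [ha, psi_one]
    simp only [Pd2, HH, rr0]
    ring
  · rw [show (3:ℕ) = 2 + 1 from rfl, Q_iter hL hQ 2, PP_iter3 hL a]
    show Pd3 L a 0 - psi L 2 (Q 0) = 0
    rw [ha, psi_two]
    simp only [Pd3, Hd1, Hd2, Hd3, rr0, rd0]
    ring
  · rw [show (4:ℕ) = 3 + 1 from rfl, Q_iter hL hQ 3]
    show iteratedDeriv 4 (PP L a) 0 - psi L 3 (Q 0) = 0
    rw [ha, PP_iter4 hL a, psi_three_val hL a]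
    simp only [Hd2, rr0, rd0, GG]
    ring

/-- The two-stage fourth-order temporal discretization is fourth-order accurate
for a single step of the autonomous scalar ODE q' = L(q). -/
theorem two_stage_fourth_order
    (L q : ℝ → ℝ) (hL : ContDiff ℝ (⊤ : ℕ∞) L)
    (hq : ∀ t, HasDerivAt q (L (q t)) t) (tn : ℝ) :
    (fun Δt : ℝ =>
      (q tn + Δt * L (q tn) +
        Δt ^ 2 / 6 *
          (deriv L (q tn) * L (q tn) +
            2 * (deriv L (q tn + Δt / 2 * L (q tn) +
                    Δt ^ 2 / 8 * (deriv L (q tn) * L (q tn))) *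
                 L (q tn + Δt / 2 * L (q tn) +
                    Δt ^ 2 / 8 * (deriv L (q tn) * L (q tn))))))
      - q (tn + Δt)) =O[nhds 0] (fun Δt : ℝ => Δt ^ 5) := by
  have hL' : ContDiff ℝ (⊤ : ℕ∞) L := hL.of_le (by simp)
  have hQ : ∀ t, HasDerivAt (fun s => q (tn + s)) (L (q (tn + t))) t := by
    intro t
    have := (hq (tn + t)).comp t ((hasDerivAt_id t).const_add tn)
    simpa [Function.comp_def] using this
  have ha : (fun s => q (tn + s)) 0 = q tn := by simp
  have H := aux_main hL' hQ ha
  exact H
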